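/- arXiv:1010.4611 — 4 statements merged into one kernel-verified Lean document; each statement's English description precedes it below -/
import Mathlib

section
/- Let n = 2 with distinct sites x₁, x₂ in ℝᵈ. If two radius tuples (r₁,r₂) and (r₁′,r₂′) produce the same power diagram (both cells equal as sets), then r₁ − r₂ = r₁′ − r₂′. -/
/-- The `i`-th power cell of the power diagram with sites `s` and radii `r`. -/
def powerCell {d n : ℕ} (s : Fin n → EuclideanSpace ℝ (Fin d)) (r : Fin n → ℝ)
    (i : Fin n) : Set (EuclideanSpace ℝ (Fin d)) :=
  {x | ∀ j, ‖x - s i‖ ^ 2 - r i ≤ ‖x - s j‖ ^ 2 - r j}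

/-!
The quadratic terms `‖x‖ ^ 2` cancel when two powers are compared, so the cell of `s 0` is the
half-space `⟪x, s 1 - s 0⟫ ≤ (‖s 1‖ ^ 2 - ‖s 0‖ ^ 2 + (r 0 - r 1)) / 2`. Since `s 1 - s 0 ≠ 0`,
a half-space with this normal determines its offset (test it at a multiple of the normal), and
hence `r 0 - r 1`.
-/

open RealInnerProductSpace

section Halfspace

variable {E : Type*} [NormedAddCommGroup E] [InnerProductSpace ℝ E]

lemma sq_norm_sub_sub_le_sq_norm_sub_sub_iff (x a b : E) (ra rb : ℝ) :
    ‖x - a‖ ^ 2 - ra ≤ ‖x - b‖ ^ 2 - rb ↔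
      ⟪x, b - a⟫ ≤ (‖b‖ ^ 2 - ‖a‖ ^ 2 + (ra - rb)) / 2 := by
  rw [norm_sub_sq_real, norm_sub_sq_real, inner_sub_right]
  constructor <;> intro h <;> linarith

lemma le_of_setOf_inner_le_subset {v : E} (hv : v ≠ 0) {a b : ℝ}
    (h : {x | ⟪x, v⟫ ≤ a} ⊆ {x | ⟪x, v⟫ ≤ b}) : a ≤ b := by
  have hv2 : ‖v‖ ^ 2 ≠ 0 := pow_ne_zero 2 (norm_ne_zero_iff.2 hv)
  have hx : ⟪(a / ‖v‖ ^ 2) • v, v⟫ = a := by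
    rw [real_inner_smul_left, real_inner_self_eq_norm_sq, div_mul_cancel₀ a hv2]
  exact hx ▸ h hx.le

lemma eq_of_setOf_inner_le_eq {v : E} (hv : v ≠ 0) {a b : ℝ}
    (h : {x | ⟪x, v⟫ ≤ a} = {x | ⟪x, v⟫ ≤ b}) : a = b :=
  le_antisymm (le_of_setOf_inner_le_subset hv h.le) (le_of_setOf_inner_le_subset hv h.ge)

end Halfspace

lemma powerCell_fin_two_zero {d : ℕ} (s : Fin 2 → EuclideanSpace ℝ (Fin d)) (r : Fin 2 → ℝ) :
    powerCell s r 0 = {x | ⟪x, s 1 - s 0⟫ ≤ (‖s 1‖ ^ 2 - ‖s 0‖ ^ 2 + (r 0 - r 1)) / 2} := by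
  ext x
  rw [Set.mem_ofPred_eq, ← sq_norm_sub_sub_le_sq_norm_sub_sub_iff]
  simp only [powerCell, Set.mem_ofPred_eq, Fin.forall_fin_two, le_refl, true_and]

/-- For two distinct sites, the power diagram determines the radii up to a
common shift: if two radius tuples give the same cells then the differences of
the radii coincide. -/
theorem radii_unique_of_powerDiagram_eq {d : ℕ} (s : Fin 2 → EuclideanSpace ℝ (Fin d))
    (hs : s 0 ≠ s 1) (r r' : Fin 2 → ℝ)
    (h : ∀ i, powerCell s r i = powerCell s r' i) :
    r 0 - r 1 = r' 0 - r' 1 := by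
  have hcell := h 0
  rw [powerCell_fin_two_zero, powerCell_fin_two_zero] at hcell
  have hoffset := eq_of_setOf_inner_le_eq (sub_ne_zero.2 hs.symm) hcell
  linarith
end

section
/- For n ≥ 2, the gcd of the binomial coefficients C(n,1), C(n,2), …, C(n,n−1) equals p if n = pᵏ is a prime power, and equals 1 otherwise. -/
/-- For `n ≥ 2`, the gcd of the binomial coefficients `C(n,1), …, C(n,n-1)`
equals `p` when `n = p^k` is a prime power, and equals `1` otherwise. -/
theorem gcd_choose_eq (n : ℕ) (hn : 2 ≤ n) :
    (∀ p k : ℕ, p.Prime → 1 ≤ k → n = p ^ k →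
      (Finset.Icc 1 (n - 1)).gcd n.choose = p) ∧
    (¬ IsPrimePow n → (Finset.Icc 1 (n - 1)).gcd n.choose = 1) := by
  refine ⟨fun p k hp hk hn_eq => ?_, Choose.gcd_choose_eq_one_of_not_isPrimePow hn⟩
  have hpow : IsPrimePow n := hn_eq ▸ (hp.isPrimePow.pow (by omega))
  rw [Choose.gcd_choose_eq_minFac_of_isPrimePow hpow, hn_eq,
    Nat.Prime.pow_minFac hp (by omega)]
end

section
/- If A and B are compact convex sets in ℝᵈ such that A ∩ B has nonempty interior, and (A_k), (B_k) are sequences of compact convex sets converging in the Hausdorff metric to A and B respectively, then A_k ∩ B_k converges to A ∩ B in the Hausdorff metric. -/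
/-!
Fix a ball `closedBall x₀ r ⊆ A ∩ B`. If the Hausdorff distances are below `t * r`, the contraction
`x ↦ lineMap x x₀ t` towards `x₀`, which moves every point by at most `t` times its distance to
`x₀`, maps `A ∩ B` into `Aₖ ∩ Bₖ` and `Aₖ ∩ Bₖ` into `A ∩ B`. By convexity the image of `x ∈ A`
is the centre of a ball of radius `t * r` inside `A`; this ball lies within `t * r` of the closed
convex set `Aₖ`, which forces its centre into `Aₖ`, since otherwise a separating hyperplane would
give a point of the ball at distance more than `t * r` from `Aₖ`. Conversely, if `x` is within
`t * r` of `a ∈ A`, then the image of `x` is within `(1 - t) * t * r` of the image of `a`, hence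
lies in the ball of radius `t * r` around it, which is contained in `A`.
-/

open Metric Filter Topology RealInnerProductSpace AffineMap

section NormedSpace

variable {E : Type*} [NormedAddCommGroup E] [NormedSpace ℝ E] {C : Set E} {x₀ x : E} {r t : ℝ}

theorem Convex.closedBall_lineMap_subset (hC : Convex ℝ C) (hball : closedBall x₀ r ⊆ C)
    (hx : x ∈ C) (ht₀ : 0 < t) (ht₁ : t ≤ 1) : closedBall (lineMap x x₀ t) (t * r) ⊆ C := by
  intro w hw
  have hz : x₀ + t⁻¹ • (w - lineMap x x₀ t) ∈ closedBall x₀ r := by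
    rw [mem_closedBall, dist_self_add_left, norm_smul, Real.norm_of_nonneg (inv_nonneg.2 ht₀.le),
      ← dist_eq_norm, inv_mul_le_iff₀ ht₀]
    exact hw
  convert hC hx (hball hz) (sub_nonneg.2 ht₁) ht₀.le (sub_add_cancel 1 t) using 1
  rw [lineMap_apply_module, smul_add, smul_inv_smul₀ ht₀.ne']
  module

theorem Convex.lineMap_mem_of_mem_thickening (hC : Convex ℝ C) (hball : closedBall x₀ r ⊆ C)
    (hx : x ∈ Metric.thickening (t * r) C) (ht₀ : 0 < t) (ht₁ : t ≤ 1) : lineMap x x₀ t ∈ C := by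
  obtain ⟨a, ha, hxa⟩ := mem_thickening_iff.1 hx
  refine hC.closedBall_lineMap_subset hball ha ht₀ ht₁ ?_
  have hdist : dist (lineMap x x₀ t) (lineMap a x₀ t) = (1 - t) * dist x a := by
    have hsub : lineMap x x₀ t - lineMap a x₀ t = (1 - t) • (x - a) := by
      simp only [lineMap_apply_module]
      module
    rw [dist_eq_norm, hsub, norm_smul, Real.norm_of_nonneg (sub_nonneg.2 ht₁), ← dist_eq_norm]
  rw [mem_closedBall, hdist]
  nlinarith [dist_nonneg (x := x) (y := a)]

end NormedSpace

section InnerProductSpace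

variable {E : Type*} [NormedAddCommGroup E] [InnerProductSpace ℝ E] [CompleteSpace E]
  {C D C' D' : Set E} {x₀ x y : E} {r t ρ M : ℝ}

theorem Convex.mem_of_closedBall_subset_thickening (hC : Convex ℝ C) (hCc : IsClosed C)
    (hρ : 0 ≤ ρ) (h : closedBall y ρ ⊆ Metric.thickening ρ C) : y ∈ C := by
  by_contra hy
  obtain ⟨f, u, hfC, hfy⟩ := geometric_hahn_banach_closed_point hC hCc hy
  set v := (InnerProductSpace.toDual ℝ E).symm f
  have hf : ∀ w, f w = ⟪v, w⟫ := fun w => InnerProductSpace.toDual_symm_apply.symm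
  -- pushed away from `C` along the normal `v` of a separating hyperplane
  set z := y + (ρ / ‖v‖) • v
  have hz : z ∈ closedBall y ρ := by
    rcases eq_or_ne v 0 with hv | hv
    · simp [z, hv, hρ]
    · rw [mem_closedBall, dist_self_add_left, norm_smul, Real.norm_of_nonneg (by positivity),
        div_mul_cancel₀ _ (norm_ne_zero_iff.2 hv)]
  obtain ⟨c, hc, hzc⟩ := mem_thickening_iff.1 (h hz)
  have hzy : ⟪v, z - y⟫ = ρ * ‖v‖ := by
    rcases eq_or_ne v 0 with hv | hv
    · simp [hv]
    · rw [add_sub_cancel_left, real_inner_smul_right, real_inner_self_eq_norm_sq]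
      field_simp
  have hyc : 0 < ⟪v, y - c⟫ := by
    rw [inner_sub_right, ← hf, ← hf]
    linarith [hfC c hc]
  have hzc' : ⟪v, z - c⟫ ≤ ‖v‖ * ρ := by
    calc ⟪v, z - c⟫ ≤ ‖v‖ * ‖z - c‖ := real_inner_le_norm _ _
      _ ≤ ‖v‖ * ρ := by
        rw [← dist_eq_norm]
        exact mul_le_mul_of_nonneg_left hzc.le (norm_nonneg v)
  have hsplit : ⟪v, z - c⟫ = ⟪v, z - y⟫ + ⟪v, y - c⟫ := by
    rw [← inner_add_right, sub_add_sub_cancel]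
  linarith

theorem Convex.lineMap_mem_of_subset_thickening (hC' : Convex ℝ C') (hC'c : IsClosed C')
    (hC : Convex ℝ C) (hr : 0 ≤ r) (hball : closedBall x₀ r ⊆ C)
    (h : C ⊆ Metric.thickening (t * r) C') (hx : x ∈ C) (ht₀ : 0 < t) (ht₁ : t ≤ 1) :
    lineMap x x₀ t ∈ C' :=
  hC'.mem_of_closedBall_subset_thickening hC'c (by positivity)
    ((hC.closedBall_lineMap_subset hball hx ht₀ ht₁).trans h)

theorem hausdorffDist_inter_le (hC : Convex ℝ C) (hD : Convex ℝ D) (hC' : Convex ℝ C')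
    (hD' : Convex ℝ D') (hC'c : IsClosed C') (hD'c : IsClosed D') (hr : 0 ≤ r)
    (hball : closedBall x₀ r ⊆ C ∩ D) (hCM : C ⊆ closedBall x₀ M) (ht₀ : 0 < t) (ht₁ : t ≤ 1)
    (hCC' : C ⊆ thickening (t * r) C') (hC'C : C' ⊆ thickening (t * r) C)
    (hDD' : D ⊆ thickening (t * r) D') (hD'D : D' ⊆ thickening (t * r) D) :
    hausdorffDist (C' ∩ D') (C ∩ D) ≤ t * (M + t * r) := by
  have hballC : closedBall x₀ r ⊆ C := hball.trans Set.inter_subset_left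
  have hballD : closedBall x₀ r ⊆ D := hball.trans Set.inter_subset_right
  have hM : 0 ≤ M := by simpa using hCM (hballC (mem_closedBall_self hr))
  have hdist : ∀ x, dist x x₀ ≤ M + t * r → dist x (lineMap x x₀ t) ≤ t * (M + t * r) := by
    intro x hx
    rw [dist_left_lineMap, Real.norm_of_nonneg ht₀.le]
    exact mul_le_mul_of_nonneg_left hx ht₀.le
  refine hausdorffDist_le_of_mem_dist (by positivity) ?_ ?_
  · rintro x ⟨hxC', hxD'⟩
    obtain ⟨a, ha, hxa⟩ := mem_thickening_iff.1 (hC'C hxC')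
    refine ⟨lineMap x x₀ t, ⟨hC.lineMap_mem_of_mem_thickening hballC (hC'C hxC') ht₀ ht₁,
      hD.lineMap_mem_of_mem_thickening hballD (hD'D hxD') ht₀ ht₁⟩, hdist x ?_⟩
    linarith [dist_triangle x a x₀, mem_closedBall.1 (hCM ha)]
  · rintro x ⟨hxC, hxD⟩
    refine ⟨lineMap x x₀ t,
      ⟨hC'.lineMap_mem_of_subset_thickening hC'c hC hr hballC hCC' hxC ht₀ ht₁,
        hD'.lineMap_mem_of_subset_thickening hD'c hD hr hballD hDD' hxD ht₀ ht₁⟩, hdist x ?_⟩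
    linarith [mem_closedBall.1 (hCM hxC), mul_nonneg ht₀.le hr]

end InnerProductSpace

section HausdorffDist

variable {X : Type*} [MetricSpace X] {s u : Set X} {δ : ℝ}

theorem Metric.subset_thickening_of_hausdorffDist_lt (hfin : hausdorffEDist s u ≠ ⊤)
    (h : hausdorffDist s u < δ) : s ⊆ thickening δ u :=
  fun _ hx => mem_thickening_iff.2 (exists_dist_lt_of_hausdorffDist_lt hx h hfin)

theorem Metric.subset_thickening_of_hausdorffDist_lt' (hfin : hausdorffEDist s u ≠ ⊤)
    (h : hausdorffDist s u < δ) : u ⊆ thickening δ s :=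
  subset_thickening_of_hausdorffDist_lt (by rwa [hausdorffEDist_comm]) (by rwa [hausdorffDist_comm])

end HausdorffDist

theorem hausdorff_convergence_of_inter_general {d : ℕ}
    (A B : Set (EuclideanSpace ℝ (Fin d)))
    (hA : IsCompact A) (hAc : Convex ℝ A)
    (hB : IsCompact B) (hBc : Convex ℝ B)
    (hint : (interior (A ∩ B)).Nonempty)
    (Ak Bk : ℕ → Set (EuclideanSpace ℝ (Fin d)))
    (hAk : ∀ k, IsCompact (Ak k) ∧ Convex ℝ (Ak k) ∧ (Ak k).Nonempty)
    (hBk : ∀ k, IsCompact (Bk k) ∧ Convex ℝ (Bk k) ∧ (Bk k).Nonempty)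
    (hAconv : Tendsto (fun k => hausdorffDist (Ak k) A) atTop (nhds 0))
    (hBconv : Tendsto (fun k => hausdorffDist (Bk k) B) atTop (nhds 0)) :
    Tendsto (fun k => hausdorffDist (Ak k ∩ Bk k) (A ∩ B)) atTop (nhds 0) := by
  obtain ⟨x₀, hx₀⟩ := hint
  obtain ⟨r, hr, hball⟩ := nhds_basis_closedBall.mem_iff.1 (mem_interior_iff_mem_nhds.1 hx₀)
  obtain ⟨M, hAM⟩ := hA.isBounded.subset_closedBall x₀
  have hx₀AB : x₀ ∈ A ∩ B := interior_subset hx₀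
  refine tendsto_order.2 ⟨fun a ha => .of_forall fun _ => ha.trans_le hausdorffDist_nonneg,
    fun ε hε => ?_⟩
  have hbound : Tendsto (fun t : ℝ => t * (M + t * r)) (𝓝[>] 0) (𝓝 0) := by
    have : Continuous (fun t : ℝ => t * (M + t * r)) := by fun_prop
    simpa using (this.tendsto 0).mono_left nhdsWithin_le_nhds
  obtain ⟨t, htε, ht₀, ht₁⟩ :=
    ((hbound.eventually (gt_mem_nhds hε)).and (Ioc_mem_nhdsGT one_pos)).exists
  filter_upwards [hAconv.eventually (gt_mem_nhds (mul_pos ht₀ hr)),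
    hBconv.eventually (gt_mem_nhds (mul_pos ht₀ hr))] with k hAkA hBkB
  obtain ⟨hAkc, hAkcv, hAkne⟩ := hAk k
  obtain ⟨hBkc, hBkcv, hBkne⟩ := hBk k
  have hfinA := hausdorffEDist_ne_top_of_nonempty_of_bounded hAkne ⟨x₀, hx₀AB.1⟩
    hAkc.isBounded hA.isBounded
  have hfinB := hausdorffEDist_ne_top_of_nonempty_of_bounded hBkne ⟨x₀, hx₀AB.2⟩
    hBkc.isBounded hB.isBounded
  exact (hausdorffDist_inter_le hAc hBc hAkcv hBkcv hAkc.isClosed hBkc.isClosed hr.le hball hAM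
    ht₀ ht₁ (subset_thickening_of_hausdorffDist_lt' hfinA hAkA)
    (subset_thickening_of_hausdorffDist_lt hfinA hAkA)
    (subset_thickening_of_hausdorffDist_lt' hfinB hBkB)
    (subset_thickening_of_hausdorffDist_lt hfinB hBkB)).trans_lt htε

/-- If `A ∩ B` has nonempty interior and sequences of compact convex sets
`Aₖ → A`, `Bₖ → B` in the Hausdorff metric, then `Aₖ ∩ Bₖ → A ∩ B`. -/
theorem hausdorff_convergence_of_inter {d : ℕ}
    (A B : Set (EuclideanSpace ℝ (Fin d)))
    (hA : IsCompact A) (hAc : Convex ℝ A) (hAne : A.Nonempty)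
    (hB : IsCompact B) (hBc : Convex ℝ B) (hBne : B.Nonempty)
    (hint : (interior (A ∩ B)).Nonempty)
    (Ak Bk : ℕ → Set (EuclideanSpace ℝ (Fin d)))
    (hAk : ∀ k, IsCompact (Ak k) ∧ Convex ℝ (Ak k) ∧ (Ak k).Nonempty)
    (hBk : ∀ k, IsCompact (Bk k) ∧ Convex ℝ (Bk k) ∧ (Bk k).Nonempty)
    (hAconv : Tendsto (fun k => hausdorffDist (Ak k) A) atTop (nhds 0))
    (hBconv : Tendsto (fun k => hausdorffDist (Bk k) B) atTop (nhds 0)) :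
    Tendsto (fun k => hausdorffDist (Ak k ∩ Bk k) (A ∩ B)) atTop (nhds 0) :=
  hausdorff_convergence_of_inter_general A B hA hAc hB hBc hint Ak Bk hAk hBk hAconv hBconv
end

section
/- Suppose for every prime power n = pᵏ and every family of continuous Hausdorff-metric functionals there exists an equipartition of any nice measure on ℝᵈ into n convex pieces equalizing d−1 additional functionals obtained by restricting and renormalizing measures. Then for every positive integer n and nice probability measures μ₀, μ₁, …, μ_{d−1} on ℝᵈ there is a partition of ℝᵈ into n convex regions K₁,…,Kₙ with μᵢ(Kⱼ) = 1/n for all 0 ≤ i ≤ d−1 and 1 ≤ j ≤ n. -/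
open MeasureTheory Filter
open scoped ENNReal

/-- A measure has a (finite) second moment. -/
def HasSecondMoment {d : ℕ} (μ : Measure (EuclideanSpace ℝ (Fin d))) : Prop :=
  ∫⁻ x, (‖x‖₊ : ℝ≥0∞) ^ 2 ∂μ < ⊤

/-- A *nice* measure on `ℝᵈ`: every affine hyperplane has measure zero, and the
measure is a weak limit of absolutely continuous measures with second moment. -/
def IsNiceMeasure {d : ℕ} (μ : Measure (EuclideanSpace ℝ (Fin d))) : Prop :=
  (∀ H : AffineSubspace ℝ (EuclideanSpace ℝ (Fin d)),
      Module.finrank ℝ H.direction = d - 1 →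
      μ (H : Set (EuclideanSpace ℝ (Fin d))) = 0) ∧
  ∃ ν : ℕ → Measure (EuclideanSpace ℝ (Fin d)),
    (∀ k, ν k ≪ (volume : Measure (EuclideanSpace ℝ (Fin d))) ∧ HasSecondMoment (ν k)) ∧
    ∀ g : EuclideanSpace ℝ (Fin d) → ℝ, Continuous g → (∃ C, ∀ x, |g x| ≤ C) →
      Tendsto (fun k => ∫ x, g x ∂(ν k)) atTop (nhds (∫ x, g x ∂μ))

/-- A partition of `ℝᵈ` into `n` convex regions: convex sets covering `ℝᵈ`
with pairwise disjoint interiors. -/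
def IsConvexPartition {d n : ℕ} (K : Fin n → Set (EuclideanSpace ℝ (Fin d))) : Prop :=
  (∀ j, Convex ℝ (K j)) ∧ (⋃ j, K j) = Set.univ ∧
    Pairwise fun j j' => interior (K j) ∩ interior (K j') = ∅

/-!
Write `n = pᵏ · m` and argue by induction on `n`. Equipartition `ℝᵈ` into `pᵏ` convex pieces
`K`, and then each piece `K` into `m` convex pieces `L` for the measures `μᵢ` conditioned on
`K`. These conditioned measures are again nice: they charge no hyperplane, and any finite
measure is a weak limit of absolutely continuous measures with second moment. Since the convex
pieces need not be measurable, conditioning only gives `μᵢ (K ∩ L) ≤ μᵢ K · μᵢ[L | K] = 1 / n`;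
but the `n` sets `K ∩ L` cover `ℝᵈ`, so all these inequalities are equalities.
-/

open ProbabilityTheory Topology Metric

section WeakApproximation

variable {E : Type*} [NormedAddCommGroup E] [MeasurableSpace E] [BorelSpace E]
  [SecondCountableTopology E]

theorem ae_norm_conv_le {μ ν : Measure E} [SFinite μ] [SFinite ν] {R S : ℝ}
    (hμ : ∀ᵐ x ∂μ, ‖x‖ ≤ R) (hν : ∀ᵐ y ∂ν, ‖y‖ ≤ S) : ∀ᵐ z ∂(μ ∗ ν), ‖z‖ ≤ R + S := by
  rw [Measure.conv, ae_map_iff measurable_add.aemeasurable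
    (measurableSet_le (by fun_prop) (by fun_prop))]
  filter_upwards [Measure.quasiMeasurePreserving_fst.ae hμ,
    Measure.quasiMeasurePreserving_snd.ae hν] with p hp₁ hp₂
  exact (norm_add_le _ _).trans (add_le_add hp₁ hp₂)

theorem tendsto_integral_comp_add_of_ae_norm_lt {ν : ℕ → Measure E}
    [∀ k, IsProbabilityMeasure (ν k)] {r : ℕ → ℝ} (hr : Tendsto r atTop (𝓝 0))
    (hν : ∀ k, ∀ᵐ y ∂(ν k), ‖y‖ < r k) {g : E → ℝ} (hg : Continuous g) {C : ℝ}
    (hC : ∀ x, |g x| ≤ C) (x : E) :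
    Tendsto (fun k => ∫ y, g (x + y) ∂(ν k)) atTop (𝓝 (g x)) := by
  rw [Metric.tendsto_nhds]
  intro ε hε
  obtain ⟨δ, hδ, hgδ⟩ := Metric.continuousAt_iff.1 hg.continuousAt (ε / 2) (half_pos hε)
  filter_upwards [hr.eventually (gt_mem_nhds hδ)] with k hrk
  have hint : Integrable (fun y => g (x + y)) (ν k) :=
    .of_bound (by fun_prop) C (.of_forall fun y => hC _)
  have hclose : ∀ᵐ y ∂(ν k), ‖g (x + y) - g x‖ ≤ ε / 2 := by
    filter_upwards [hν k] with y hy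
    refine (hgδ ?_).le
    simpa [dist_eq_norm] using hy.trans hrk
  calc dist (∫ y, g (x + y) ∂(ν k)) (g x) = ‖∫ y, (g (x + y) - g x) ∂(ν k)‖ := by
        rw [integral_sub hint (integrable_const _), integral_const, dist_eq_norm]
        simp
    _ ≤ ε / 2 := by simpa using norm_integral_le_of_norm_le_const hclose
    _ < ε := half_lt_self hε

theorem tendsto_integral_restrict_closedBall_conv {μ : Measure E} [IsFiniteMeasure μ]
    {ν : ℕ → Measure E} [∀ k, IsProbabilityMeasure (ν k)] {r : ℕ → ℝ}
    (hr : Tendsto r atTop (𝓝 0)) (hν : ∀ k, ∀ᵐ y ∂(ν k), ‖y‖ < r k) {g : E → ℝ}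
    (hg : Continuous g) {C : ℝ} (hC : ∀ x, |g x| ≤ C) :
    Tendsto (fun k : ℕ => ∫ z, g z ∂(μ.restrict (closedBall 0 k) ∗ ν k)) atTop
      (𝓝 (∫ x, g x ∂μ)) := by
  set h : ℕ → E → ℝ := fun k x => ∫ y, g (x + y) ∂(ν k)
  have hconv : ∀ k : ℕ, ∫ z, g z ∂(μ.restrict (closedBall 0 k) ∗ ν k)
      = ∫ x, (closedBall 0 k).indicator (h k) x ∂μ := fun k => by
    rw [integral_conv (.of_bound hg.aestronglyMeasurable C (.of_forall hC)),
      integral_indicator measurableSet_closedBall]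
  simp_rw [hconv]
  refine tendsto_integral_of_dominated_convergence (fun _ => C) (fun k => ?_)
    (integrable_const C) (fun k => .of_forall fun x => ?_) (.of_forall fun x => ?_)
  · exact ((hg.comp continuous_add).stronglyMeasurable.integral_prod_right'.indicator
      measurableSet_closedBall).aestronglyMeasurable
  · by_cases hx : x ∈ closedBall (0 : E) k
    · rw [Set.indicator_of_mem hx]
      exact norm_integral_le_of_norm_le_const (.of_forall fun y => hC _) |>.trans (by simp)
    · simpa [Set.indicator_of_notMem hx] using (abs_nonneg _).trans (hC x)
  · refine (tendsto_integral_comp_add_of_ae_norm_lt hr hν hg hC x).congr' ?_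
    filter_upwards [eventually_ge_atTop ⌈‖x‖⌉₊] with k hk
    have hx : ‖x‖ ≤ k := (Nat.le_ceil _).trans (by exact_mod_cast hk)
    rw [Set.indicator_of_mem (mem_closedBall_zero_iff.2 hx)]

end WeakApproximation

theorem HasSecondMoment.of_ae_norm_le {d : ℕ} {μ : Measure (EuclideanSpace ℝ (Fin d))}
    [IsFiniteMeasure μ] {R : ℝ} (hμ : ∀ᵐ x ∂μ, ‖x‖ ≤ R) : HasSecondMoment μ := by
  refine (lintegral_mono_ae (g := fun _ => ENNReal.ofReal R ^ 2) ?_).trans_lt ?_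
  · filter_upwards [hμ] with x hx
    rw [← enorm_eq_nnnorm, ← ofReal_norm]
    exact pow_le_pow_left₀ zero_le (ENNReal.ofReal_le_ofReal hx) 2
  · rw [lintegral_const]
    exact ENNReal.mul_lt_top (by simp) (measure_lt_top μ _)

/-- Truncate `μ` to the ball of radius `k` and smear it out uniformly over the ball of radius
`1 / (k + 1)`. -/
theorem exists_absolutelyContinuous_hasSecondMoment_tendsto_integral {d : ℕ}
    (μ : Measure (EuclideanSpace ℝ (Fin d))) [IsFiniteMeasure μ] :
    ∃ ν : ℕ → Measure (EuclideanSpace ℝ (Fin d)),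
      (∀ k, ν k ≪ (volume : Measure (EuclideanSpace ℝ (Fin d))) ∧
        HasSecondMoment (ν k)) ∧
      ∀ g : EuclideanSpace ℝ (Fin d) → ℝ, Continuous g → (∃ C, ∀ x, |g x| ≤ C) →
        Tendsto (fun k => ∫ x, g x ∂(ν k)) atTop (nhds (∫ x, g x ∂μ)) := by
  set r : ℕ → ℝ := fun k => 1 / ((k : ℝ) + 1)
  have hr_pos : ∀ k, 0 < r k := fun k => by positivity
  set G : ℕ → Measure (EuclideanSpace ℝ (Fin d)) := fun k => volume[|ball 0 (r k)]
  have hG : ∀ k, IsProbabilityMeasure (G k) := fun k =>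
    cond_isProbabilityMeasure_of_finite (measure_ball_pos _ _ (hr_pos k)).ne'
      measure_ball_lt_top.ne
  have hG_ball : ∀ k, ∀ᵐ y ∂(G k), ‖y‖ < r k := fun k => by
    filter_upwards [ae_cond_mem measurableSet_ball] with y hy
    exact mem_ball_zero_iff.1 hy
  refine ⟨fun k => μ.restrict (closedBall 0 k) ∗ G k, fun k => ⟨?_, ?_⟩,
    fun g hg ⟨C, hC⟩ => tendsto_integral_restrict_closedBall_conv
      tendsto_one_div_add_atTop_nhds_zero_nat hG_ball hg hC⟩
  · exact Measure.conv_absolutelyContinuous cond_absolutelyContinuous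
  · refine HasSecondMoment.of_ae_norm_le (ae_norm_conv_le (R := k) (S := 1) ?_ ?_)
    · filter_upwards [ae_restrict_mem measurableSet_closedBall] with x hx
      exact mem_closedBall_zero_iff.1 hx
    · filter_upwards [hG_ball k] with y hy
      exact hy.le.trans (div_le_one_of_le₀ (by simp) (by positivity))

theorem IsNiceMeasure.of_absolutelyContinuous {d : ℕ}
    {μ ν : Measure (EuclideanSpace ℝ (Fin d))} [IsFiniteMeasure ν] (hμ : IsNiceMeasure μ)
    (hνμ : ν ≪ μ) : IsNiceMeasure ν :=
  ⟨fun H hH => hνμ (hμ.1 H hH),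
    exists_absolutelyContinuous_hasSecondMoment_tendsto_integral ν⟩

theorem IsConvexPartition.refine {d a b : ℕ} {K : Fin a → Set (EuclideanSpace ℝ (Fin d))}
    {L : Fin a → Fin b → Set (EuclideanSpace ℝ (Fin d))} (hK : IsConvexPartition K)
    (hL : ∀ j, IsConvexPartition (L j)) :
    IsConvexPartition fun j : Fin (a * b) =>
      K (finProdFinEquiv.symm j).1 ∩ L (finProdFinEquiv.symm j).1 (finProdFinEquiv.symm j).2 := by
  refine ⟨fun j => (hK.1 _).inter ((hL _).1 _), Set.eq_univ_of_forall fun x => ?_, ?_⟩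
  · obtain ⟨j, hj⟩ := Set.iUnion_eq_univ_iff.1 hK.2.1 x
    obtain ⟨k, hk⟩ := Set.iUnion_eq_univ_iff.1 (hL j).2.1 x
    exact Set.mem_iUnion.2 ⟨finProdFinEquiv (j, k), by simpa using ⟨hj, hk⟩⟩
  · suffices ∀ q q' : Fin a × Fin b, q ≠ q' →
        interior (K q.1 ∩ L q.1 q.2) ∩ interior (K q'.1 ∩ L q'.1 q'.2) = ∅ from
      fun j j' hjj' => this _ _ (finProdFinEquiv.symm.injective.ne hjj')
    rintro ⟨j, k⟩ ⟨j', k'⟩ hne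
    rw [interior_inter, interior_inter]
    obtain rfl | hj := eq_or_ne j j'
    · have hk : k ≠ k' := fun h => hne (h ▸ rfl)
      exact Set.eq_empty_of_forall_notMem fun x hx => ((hL j).2.2 hk).subset ⟨hx.1.2, hx.2.2⟩
    · exact Set.eq_empty_of_forall_notMem fun x hx => (hK.2.2 hj).subset ⟨hx.1.1, hx.2.1⟩

theorem measure_eq_inv_card_of_iUnion_eq_univ {α ι : Type*} [MeasurableSpace α] [Fintype ι]
    {μ : Measure α} [IsProbabilityMeasure μ] {K : ι → Set α} (hK : ⋃ i, K i = Set.univ)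
    (hle : ∀ i, μ (K i) ≤ (Fintype.card ι : ℝ≥0∞)⁻¹) (i : ι) :
    μ (K i) = (Fintype.card ι : ℝ≥0∞)⁻¹ := by
  classical
  set c := (Fintype.card ι : ℝ≥0∞)⁻¹
  have hcard : Fintype.card ι ≠ 0 := (Fintype.card_pos_iff.2 ⟨i⟩).ne'
  have hrest : ∑ j ∈ Finset.univ.erase i, μ (K j) ≤ (Fintype.card ι - 1) • c := by
    have := Finset.sum_le_card_nsmul (Finset.univ.erase i) (fun j => μ (K j)) c fun j _ => hle j
    rwa [Finset.card_erase_of_mem (Finset.mem_univ i), Finset.card_univ] at this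
  have hfin : (Fintype.card ι - 1) • c ≠ ∞ := by
    rw [nsmul_eq_mul]
    exact ENNReal.mul_ne_top (ENNReal.natCast_ne_top _)
      (ENNReal.inv_ne_top.2 (Nat.cast_ne_zero.2 hcard))
  refine le_antisymm (hle i) (ENNReal.le_of_add_le_add_right hfin ?_)
  calc c + (Fintype.card ι - 1) • c = 1 := by
        rw [← succ_nsmul', Nat.sub_add_cancel (Nat.one_le_iff_ne_zero.2 hcard), nsmul_eq_mul,
          ENNReal.mul_inv_cancel (by simpa using hcard) (by simp)]
    _ = μ (⋃ j, K j) := by rw [hK, measure_univ]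
    _ ≤ ∑ j, μ (K j) := measure_iUnion_fintype_le _ _
    _ = μ (K i) + ∑ j ∈ Finset.univ.erase i, μ (K j) :=
        (Finset.add_sum_erase _ _ (Finset.mem_univ i)).symm
    _ ≤ μ (K i) + (Fintype.card ι - 1) • c := by gcongr

theorem measure_inter_le_mul_cond {α : Type*} [MeasurableSpace α] (μ : Measure α)
    {s : Set α} (hs : μ s ≠ ∞) (t : Set α) : μ (s ∩ t) ≤ μ s * μ[t|s] := by
  obtain hs₀ | hs₀ := eq_or_ne (μ s) 0
  · simp [measure_mono_null Set.inter_subset_left hs₀]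
  · rw [ProbabilityTheory.cond, Measure.smul_apply, smul_eq_mul, ← mul_assoc,
      ENNReal.mul_inv_cancel hs₀ hs, one_mul, Set.inter_comm]
    exact Measure.le_restrict_apply s t

def HasEquipartition (d n : ℕ) : Prop :=
  ∀ μ : Fin d → Measure (EuclideanSpace ℝ (Fin d)),
    (∀ i, IsNiceMeasure (μ i)) → (∀ i, IsProbabilityMeasure (μ i)) →
    ∃ K : Fin n → Set (EuclideanSpace ℝ (Fin d)),
      IsConvexPartition K ∧ ∀ i j, μ i (K j) = (n : ℝ≥0∞)⁻¹

theorem hasEquipartition_one (d : ℕ) : HasEquipartition d 1 := fun μ _ _ =>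
  ⟨fun _ => Set.univ, ⟨fun _ => convex_univ, Set.iUnion_const _, Subsingleton.pairwise⟩,
    fun _ _ => by simp⟩

theorem HasEquipartition.mul {d a b : ℕ} (ha : HasEquipartition d a)
    (hb : HasEquipartition d b) : HasEquipartition d (a * b) := by
  intro μ hnice hprob
  obtain ⟨K, hK, hμK⟩ := ha μ hnice hprob
  have hμK₀ : ∀ i j, μ i (K j) ≠ 0 := fun i j => by simp [hμK]
  choose L hL hμL using fun j => hb (fun i => (μ i)[|K j])
    (fun i => (hnice i).of_absolutelyContinuous cond_absolutelyContinuous)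
    (fun i => cond_isProbabilityMeasure (hμK₀ i j))
  refine ⟨_, hK.refine hL, fun i => ?_⟩
  have hle (j : Fin a × Fin b) : μ i (K j.1 ∩ L j.1 j.2) ≤ ((a * b : ℕ) : ℝ≥0∞)⁻¹ :=
    calc _ ≤ μ i (K j.1) * (μ i)[L j.1 j.2|K j.1] :=
          measure_inter_le_mul_cond _ (measure_ne_top _ _) _
      _ = _ := by rw [hμK, hμL, Nat.cast_mul, ENNReal.mul_inv (by simp) (by simp)]
  simpa using measure_eq_inv_card_of_iUnion_eq_univ (hK.refine hL).2.1
    (by simpa using fun j => hle (finProdFinEquiv.symm j))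

/-- Reduction of the generalized Ham Sandwich theorem (the Kaneko–Kano
conjecture) to the prime-power equipartition theorem: if every `d`-tuple of
nice probability measures admits a simultaneous equipartition into `pᵏ` convex
regions for every prime power `pᵏ`, then such an equipartition exists into `n`
convex regions for every positive integer `n`. -/
theorem hamSandwich_of_primePow_equipartition (d : ℕ)
    (hyp : ∀ p k : ℕ, p.Prime → 1 ≤ k →
      ∀ ν : Fin d → Measure (EuclideanSpace ℝ (Fin d)),
        (∀ i, IsNiceMeasure (ν i)) → (∀ i, IsProbabilityMeasure (ν i)) →
        ∃ K : Fin (p ^ k) → Set (EuclideanSpace ℝ (Fin d)),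
          IsConvexPartition K ∧
          ∀ i j, ν i (K j) = ((p ^ k : ℕ) : ℝ≥0∞)⁻¹) :
    ∀ n : ℕ, 0 < n →
      ∀ μ : Fin d → Measure (EuclideanSpace ℝ (Fin d)),
        (∀ i, IsNiceMeasure (μ i)) → (∀ i, IsProbabilityMeasure (μ i)) →
        ∃ K : Fin n → Set (EuclideanSpace ℝ (Fin d)),
          IsConvexPartition K ∧
          ∀ i j, μ i (K j) = ((n : ℕ) : ℝ≥0∞)⁻¹ := by
  suffices ∀ n, 0 < n → HasEquipartition d n from this
  intro n hn
  induction n using Nat.recOnPrimePow with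
  | zero => exact absurd hn (lt_irrefl 0)
  | one => exact hasEquipartition_one d
  | prime_pow_mul a p k hp _ hk ih =>
    exact HasEquipartition.mul (hyp p k hp hk) (ih (Nat.pos_of_mul_pos_left hn))
end
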